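/- arXiv:1909.10450 — 5 statements merged into one kernel-verified Lean document; each statement's English description precedes it below -/
import Mathlib

section
/- Let R be an algebraically closed field of characteristic 0. Let N be an odd positive integer, s a natural number, c a nonzero element of R, and A an invertible N×N matrix over R such that A^(2^s) = c·I_N. Then the trace of A is nonzero. -/
/-!
Every eigenvalue `μ` of `A` satisfies `μ ^ 2 ^ s = c`, so after dividing by a fixed `2 ^ s`-th
root `d` of `c` the trace of `A` becomes `d` times a sum of `N` roots of unity of order dividing
`2 ^ s`. Writing these as powers of a primitive root `ζ`, a vanishing sum gives an integer
polynomial `f` with `f(ζ) = 0` and `f(1) = N`. The minimal polynomial of `ζ` over `ℤ` is the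
cyclotomic polynomial `Φ_{2^s}`, which divides `f` in `ℤ[X]`; as `Φ_{2^s}(1)` is `2` (or `0`
when `s = 0`), `N` would be even.
-/

open Polynomial

theorem Matrix.pow_eq_of_isRoot_charpoly {K n : Type*} [Field K] [Fintype n] [DecidableEq n]
    {A : Matrix n n K} {k : ℕ} {c : K} (hA : A ^ k = c • 1) {μ : K}
    (hμ : A.charpoly.IsRoot μ) : μ ^ k = c := by
  cases isEmpty_or_nonempty n
  · simp [Matrix.charpoly_isEmpty] at hμ
  have := spectrum.pow_mem_pow A k (Matrix.mem_spectrum_of_isRoot_charpoly hμ)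
  rwa [hA, ← Algebra.algebraMap_eq_smul_one, spectrum.scalar_eq, Set.mem_singleton_iff] at this

theorem IsPrimitiveRoot.eval_one_cyclotomic_dvd_card_of_sum_eq_zero {K : Type*} [Field K]
    [CharZero K] {n : ℕ} [NeZero n] {ζ : K} (hζ : IsPrimitiveRoot ζ n) {m : Multiset K}
    (hm : ∀ x ∈ m, x ^ n = 1) (hsum : m.sum = 0) :
    (cyclotomic n ℤ).eval 1 ∣ (Multiset.card m : ℤ) := by
  choose! k hk using fun x hx => hζ.eq_pow_of_pow_eq_one (hm x hx)
  set f : ℤ[X] := (m.map fun x => X ^ k x).sum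
  have hf : aeval ζ f = 0 := by
    simp only [f, map_multiset_sum, Multiset.map_map, Function.comp_def, map_pow, aeval_X]
    rw [Multiset.map_congr rfl fun x hx => (hk x hx).2, Multiset.map_id', hsum]
  have hdvd : cyclotomic n ℤ ∣ f := by
    rw [cyclotomic_eq_minpoly hζ (NeZero.pos n)]
    exact minpoly.isIntegrallyClosed_dvd (hζ.isIntegral (NeZero.pos n)) hf
  simpa [f, eval_multisetSum] using eval_dvd (x := 1) hdvd

theorem two_dvd_eval_one_cyclotomic_two_pow (s : ℕ) :
    (2 : ℤ) ∣ (cyclotomic (2 ^ s) ℤ).eval 1 := by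
  cases s <;> simp

theorem stmt_0_general (R : Type*) [Field R] [IsAlgClosed R] [CharZero R]
    (N : ℕ) (hNodd : Odd N)
    (s : ℕ) (c : R) (hc : c ≠ 0)
    (A : Matrix (Fin N) (Fin N) R)
    (hpow : A ^ (2 ^ s) = c • (1 : Matrix (Fin N) (Fin N) R)) :
    A.trace ≠ 0 := by
  intro htr
  obtain ⟨d, hd⟩ := IsAlgClosed.exists_pow_nat_eq c (pow_pos two_pos s)
  obtain ⟨ζ, hζ⟩ := HasEnoughRootsOfUnity.exists_primitiveRoot R (2 ^ s)
  set m := A.charpoly.roots.map (· / d)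
  have hm : ∀ x ∈ m, x ^ 2 ^ s = 1 := by
    simp only [m, Multiset.forall_mem_map_iff]
    intro μ hμ
    rw [div_pow, hd, Matrix.pow_eq_of_isRoot_charpoly hpow (isRoot_of_mem_roots hμ),
      div_self hc]
  have hsum : m.sum = 0 := by
    rw [Multiset.sum_map_div, Multiset.map_id', ← Matrix.trace_eq_sum_roots_charpoly, htr,
      zero_div]
  have hcard : Multiset.card m = N := by
    rw [Multiset.card_map, IsAlgClosed.card_roots_eq_natDegree, Matrix.charpoly_natDegree_eq_dim,
      Fintype.card_fin]
  have h2N := (two_dvd_eval_one_cyclotomic_two_pow s).trans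
    (hζ.eval_one_cyclotomic_dvd_card_of_sum_eq_zero hm hsum)
  rw [hcard] at h2N
  exact hNodd.not_two_dvd_nat (by exact_mod_cast h2N)

/-- **Lemma.** Let `R` be an algebraically closed field of characteristic 0, `N` an odd
positive integer, `s` a natural number, `c` a nonzero element of `R`, and `A` an invertible
`N × N` matrix over `R` with `A ^ (2 ^ s) = c • 1`.  Then the trace of `A` is nonzero. -/
theorem stmt_0 (R : Type*) [Field R] [IsAlgClosed R] [CharZero R]
    (N : ℕ) (hNodd : Odd N) (hNpos : 0 < N)
    (s : ℕ) (c : R) (hc : c ≠ 0)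
    (A : Matrix (Fin N) (Fin N) R) (hA : IsUnit A)
    (hpow : A ^ (2 ^ s) = c • (1 : Matrix (Fin N) (Fin N) R)) :
    A.trace ≠ 0 :=
  stmt_0_general R N hNodd s c hc A hpow
end

section
/- Let F/F₀ be a quadratic extension of nonarchimedean locally compact fields of residue characteristic p ≠ 2, with nontrivial automorphism σ, ring of integers o_F and maximal ideal p_F. Let n be an odd positive integer, and let 𝔞 ⊆ M_n(F) be the standard minimal hereditary (Iwahori) order, i.e. the set of matrices x with x_{ij} ∈ o_F for i ≤ j and x_{ij} ∈ p_F for i > j. Then there exist g₁ ∈ GL_n(F) and units a₁, …, a_n ∈ o_F^× such that σ(ᵗg₁⁻¹)·g₁⁻¹ = A, where A is the antidiagonal matrix whose (i, n+1−i) entry is a_i and all other entries are 0, and moreover σ(ᵗ(g₁⁻¹·𝔞·g₁)) = g₁⁻¹·𝔞·g₁. -/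
open Matrix

local notation "ℤᵐ⁰" => WithZero (Multiplicative ℤ)

/-!
Since `p ≠ 2`, `-1` is a sum of two squares modulo `p`, and Hensel's lemma lifts this to
`c ^ 2 + d ^ 2 = -1` with `c, d` fixed by `σ`. Then `K = !![c, d; d, -c]` satisfies `ᵗK K = -1`,
so blocks of `K` turn the standard form `ᵗx x` on `F^n` into `⟨1,…,1⟩ ⊕ ⟨-1,…,-1⟩ ⊕ ⟨±1⟩`, and
pairing each `1` with a `-1` through `!![1, 1; 1, -1]` gives a basis `B` with σ-fixed entries and
`σ(ᵗB) B = ᵗB B = A` antidiagonal with entries `2, ±1`. For `g₁ = B⁻¹` one computes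
`σ(ᵗ(g₁⁻¹ x g₁)) = g₁⁻¹ (A⁻¹ σ(ᵗx) A) g₁`, and `x ↦ A⁻¹ σ(ᵗx) A` maps the Iwahori order onto
itself, because it moves the valuation of the `(i, j)` entry to position `(n+1-j, n+1-i)`.
-/

open Filter Topology

namespace Valuation

variable {F Γ₀ : Type*} [Field F] [LinearOrderedCommGroupWithZero Γ₀] (v : Valuation F Γ₀)

theorem map_eq_one_of_map_sub_lt_one {a x : F} (ha : v a = 1) (h : v (x - a) < 1) : v x = 1 :=
  ha ▸ v.map_eq_of_sub_lt (ha ▸ h)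

theorem eq_of_sq_eq_of_map_sub_lt_one (h2 : v 2 = 1) {a x y : F} (ha : v a = 1)
    (hx : v (x - a) < 1) (hy : v (y - a) < 1) (h : x ^ 2 = y ^ 2) : x = y := by
  have h2a : v (2 * a) = 1 := by rw [map_mul, h2, ha, one_mul]
  have hsum : v (x + y) = 1 := by
    refine v.map_eq_one_of_map_sub_lt_one h2a ?_
    calc v (x + y - 2 * a) = v ((x - a) + (y - a)) := by ring_nf
      _ ≤ max _ _ := v.map_add _ _
      _ < 1 := max_lt hx hy
  have hsum0 : x + y ≠ 0 := by
    intro h0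
    simp [h0] at hsum
  have hprod : (x - y) * (x + y) = 0 := by linear_combination h
  exact sub_eq_zero.mp ((mul_eq_zero.mp hprod).resolve_right hsum0)

variable (p : ℕ) [CharP (IsLocalRing.ResidueField v.valuationSubring) p]

theorem map_intCast_lt_one_iff (z : ℤ) : v z < 1 ↔ (p : ℤ) ∣ z := by
  rw [← CharP.intCast_eq_zero_iff (IsLocalRing.ResidueField v.valuationSubring) p,
    ← map_intCast (IsLocalRing.residue v.valuationSubring), IsLocalRing.residue_eq_zero_iff,
    mem_maximalIdeal_iff]
  simp

theorem map_intCast_eq_one_iff (z : ℤ) : v z = 1 ↔ ¬ (p : ℤ) ∣ z := by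
  rw [← v.map_intCast_lt_one_iff p, not_lt]
  exact ⟨ge_of_eq, ((v.mem_valuationSubring_iff _).mp (intCast_mem _ z)).antisymm⟩

variable {p}

theorem map_two_eq_one [Fact p.Prime] (hp2 : p ≠ 2) : v 2 = 1 := by
  have h := v.map_intCast_eq_one_iff p 2
  push_cast at h
  rw [h, Int.natCast_dvd_ofNat, Nat.prime_dvd_prime_iff_eq Fact.out Nat.prime_two]
  exact hp2

end Valuation

theorem Int.exists_sq_add_sq_add_one_dvd (p : ℕ) [Fact p.Prime] :
    ∃ a b : ℤ, ¬ (p : ℤ) ∣ a ∧ (p : ℤ) ∣ a ^ 2 + b ^ 2 + 1 := by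
  obtain ⟨a, b, hab⟩ := ZMod.sq_add_sq p (-1)
  simp_rw [← ZMod.intCast_zmod_eq_zero_iff_dvd]
  by_cases ha : a = 0
  · refine ⟨b.cast, a.cast, ?_, ?_⟩ <;> push_cast [ZMod.intCast_cast, ZMod.cast_id]
    · rintro rfl
      simp [ha] at hab
    · linear_combination hab
  · refine ⟨a.cast, b.cast, ?_, ?_⟩ <;> push_cast [ZMod.intCast_cast, ZMod.cast_id]
    · exact ha
    · linear_combination hab

def sqrtNewton {F : Type*} [Field F] (u x : F) : F := x - (x ^ 2 - u) / (2 * x)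

section Hensel

variable {F Γ₀ : Type*} [Field F] [LinearOrderedCommGroupWithZero Γ₀] [Valued F Γ₀]

instance Valued.nonarchimedeanAddGroup : NonarchimedeanAddGroup F where
  is_nonarchimedean U hU := by
    obtain ⟨γ, hγ⟩ := Valued.mem_nhds_zero.mp hU
    exact ⟨⟨Valued.v.restrict.ltAddSubgroup γ, Valued.isOpen_ball F γ.1⟩, hγ⟩

theorem Valued.tendsto_zero_of_valuation_le {ι : Type*} {l : Filter ι} {f g : ι → F}
    (hg : Tendsto g l (𝓝 0)) (hfg : ∀ i, Valued.v (f i) ≤ Valued.v (g i)) :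
    Tendsto f l (𝓝 0) := by
  rw [(Valued.hasBasis_nhds_zero F Γ₀).tendsto_right_iff] at hg ⊢
  intro γ _
  filter_upwards [hg γ trivial] with i hi
  exact ((Valuation.restrict_le_iff _).mpr (hfg i)).trans_lt hi

theorem Valued.isClosed_setOf_valuation_lt_one : IsClosed {x : F | Valued.v x < 1} := by
  simpa only [Valuation.restrict_lt_one_iff, map_one] using Valued.isClosed_ball F 1

theorem valuation_sqrtNewton (h2 : Valued.v (2 : F) = 1) {u x : F} (hx : Valued.v x = 1) :
    Valued.v (sqrtNewton u x - x) = Valued.v (x ^ 2 - u) ∧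
      Valued.v (sqrtNewton u x ^ 2 - u) = Valued.v (x ^ 2 - u) ^ 2 := by
  have hx0 : x ≠ 0 := by
    rintro rfl
    simp at hx
  have h20 : (2 : F) ≠ 0 := by
    intro h
    simp [h] at h2
  have hcorr : Valued.v ((x ^ 2 - u) / (2 * x)) = Valued.v (x ^ 2 - u) := by
    rw [map_div₀, map_mul, h2, hx, mul_one, div_one]
  constructor
  · rw [sqrtNewton, sub_sub_cancel_left, Valuation.map_neg, hcorr]
  · rw [← hcorr, ← map_pow]
    congr 1
    unfold sqrtNewton
    field_simp
    ring

theorem valuation_iterate_sqrtNewton (h2 : Valued.v (2 : F) = 1) {u a : F}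
    (ha : Valued.v a = 1) (hu : Valued.v (a ^ 2 - u) < 1) (k : ℕ) :
    Valued.v ((sqrtNewton u)^[k] a - a) < 1 ∧
      Valued.v (((sqrtNewton u)^[k] a) ^ 2 - u) ≤ Valued.v (a ^ 2 - u) ^ (k + 1) := by
  set t := Valued.v (a ^ 2 - u)
  induction k with
  | zero => exact ⟨by simp, by simp [t]⟩
  | succ k ih =>
    obtain ⟨hdist, hval⟩ := ih
    set x := (sqrtNewton u)^[k] a
    obtain ⟨hstep, hsq⟩ :=
      valuation_sqrtNewton h2 (u := u) (Valued.v.map_eq_one_of_map_sub_lt_one ha hdist)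
    have hval_le : Valued.v (x ^ 2 - u) ≤ t :=
      hval.trans (by simpa using pow_le_pow_right_of_le_one' hu.le (Nat.le_add_left 1 k))
    rw [Function.iterate_succ_apply']
    constructor
    · calc Valued.v (sqrtNewton u x - a) = Valued.v ((sqrtNewton u x - x) + (x - a)) := by
            ring_nf
        _ ≤ max _ _ := Valuation.map_add _ _ _
        _ < 1 := max_lt (hstep ▸ hval_le.trans_lt hu) hdist
    · calc Valued.v (sqrtNewton u x ^ 2 - u)
          = Valued.v (x ^ 2 - u) * Valued.v (x ^ 2 - u) := by rw [hsq, sq]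
        _ ≤ t ^ (k + 1) * t := mul_le_mul' hval hval_le
        _ = t ^ (k + 2) := (pow_succ t (k + 1)).symm

variable [MulArchimedean Γ₀] [CompleteSpace F]

theorem exists_sq_eq_of_valuation_sq_sub_lt_one (h2 : Valued.v (2 : F) = 1) {u a : F}
    (ha : Valued.v a = 1) (hu : Valued.v (a ^ 2 - u) < 1) :
    ∃ c : F, c ^ 2 = u ∧ Valued.v (c - a) < 1 := by
  set x : ℕ → F := fun k => (sqrtNewton u)^[k] a
  have hbound := valuation_iterate_sqrtNewton h2 ha hu
  have hpow : Tendsto (fun k : ℕ => (a ^ 2 - u) ^ (k + 1)) atTop (𝓝 0) :=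
    (Valued.tendsto_zero_pow_of_v_lt_one hu).comp (tendsto_add_atTop_nat 1)
  have hres : Tendsto (fun k => x k ^ 2 - u) atTop (𝓝 0) :=
    Valued.tendsto_zero_of_valuation_le hpow fun k => by rw [map_pow]; exact (hbound k).2
  have hcauchy : CauchySeq x := by
    refine NonarchimedeanAddGroup.cauchySeq_of_tendsto_sub_nhds_zero
      (Valued.tendsto_zero_of_valuation_le hres fun k => ?_)
    simp only [x, Function.iterate_succ_apply']
    exact (valuation_sqrtNewton h2 (Valued.v.map_eq_one_of_map_sub_lt_one ha (hbound k).1)).1.le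
  obtain ⟨c, hc⟩ := cauchySeq_tendsto_of_complete hcauchy
  refine ⟨c, sub_eq_zero.mp (tendsto_nhds_unique ((hc.pow 2).sub_const u) hres), ?_⟩
  exact Valued.isClosed_setOf_valuation_lt_one.mem_of_tendsto (hc.sub_const a)
    (Eventually.of_forall fun k => (hbound k).1)

theorem exists_fixed_sq_add_sq_eq_neg_one (p : ℕ) [Fact p.Prime] (hp2 : p ≠ 2)
    [CharP (IsLocalRing.ResidueField (Valued.v : Valuation F Γ₀).valuationSubring) p]
    (σ : F ≃+* F) (hσv : ∀ x, Valued.v (σ x) = Valued.v x) :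
    ∃ c d : F, σ c = c ∧ σ d = d ∧ c ^ 2 + d ^ 2 = -1 := by
  let v : Valuation F Γ₀ := Valued.v
  have h2 := v.map_two_eq_one hp2
  obtain ⟨a, b, ha, hab⟩ := Int.exists_sq_add_sq_add_one_dvd p
  have ha1 : v a = 1 := (v.map_intCast_eq_one_iff p a).mpr ha
  obtain ⟨c, hc, hca⟩ := exists_sq_eq_of_valuation_sq_sub_lt_one h2 (u := -(1 + (b : F) ^ 2))
    ha1 (by convert (v.map_intCast_lt_one_iff p _).mpr hab using 2; push_cast; ring)
  refine ⟨c, b, ?_, map_intCast σ b, by linear_combination hc⟩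
  -- `σ c` is a second square root of the σ-fixed `c ^ 2`, also close to the integer `a`.
  refine v.eq_of_sq_eq_of_map_sub_lt_one h2 ha1 ?_ hca ?_
  · rwa [← map_intCast σ a, ← map_sub, hσv]
  · rw [← map_pow, hc]
    simp

end Hensel

theorem Fin.eq_rev_comm {n : ℕ} {i j : Fin n} : j = Fin.rev i ↔ i = Fin.rev j := by
  rw [eq_comm, Fin.rev_eq_iff]

namespace Matrix

def antidiagonal {n : ℕ} {α : Type*} [Zero α] (a : Fin n → α) : Matrix (Fin n) (Fin n) α :=
  of fun i j => if j = Fin.rev i then a i else 0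

section Antidiagonal

variable {n : ℕ} {α : Type*}

theorem antidiagonal_mul_apply [NonUnitalNonAssocSemiring α] (a : Fin n → α)
    (M : Matrix (Fin n) (Fin n) α) (i j : Fin n) :
    (antidiagonal a * M) i j = a i * M (Fin.rev i) j := by
  simp [antidiagonal, mul_apply, ite_mul]

theorem mul_antidiagonal_apply [NonUnitalNonAssocSemiring α] (a : Fin n → α)
    (M : Matrix (Fin n) (Fin n) α) (i j : Fin n) :
    (M * antidiagonal a) i j = M i (Fin.rev j) * a (Fin.rev j) := by
  simp [antidiagonal, mul_apply, mul_ite, Fin.eq_rev_comm (i := _) (j := j)]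

theorem isUnit_antidiagonal [CommRing α] {a : Fin n → α} (ha : ∀ i, IsUnit (a i)) :
    IsUnit (antidiagonal a) := by
  have h : antidiagonal a = (diagonal a).submatrix id Fin.revPerm := by
    ext i j
    simp [antidiagonal, diagonal_apply, Fin.eq_rev_comm (j := j)]
  rw [h, isUnit_iff_isUnit_det, det_permute']
  exact ((Equiv.Perm.sign _).isUnit.map (Int.castRingHom α)).mul
    ((isUnit_iff_isUnit_det _).mp (isUnit_diagonal.mpr (Pi.isUnit_iff.mpr ha)))

end Antidiagonal

section TwistedTranspose

variable {n R : Type*}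

def twistedTranspose [Semiring R] (σ : R ≃+* R) (x : Matrix n n R) : Matrix n n R := xᵀ.map σ

variable [CommSemiring R] (σ : R ≃+* R)

theorem twistedTranspose_mul [Fintype n] (x y : Matrix n n R) :
    twistedTranspose σ (x * y) = twistedTranspose σ y * twistedTranspose σ x := by
  simp [twistedTranspose, transpose_mul, Matrix.map_mul]

theorem twistedTranspose_one [DecidableEq n] : twistedTranspose σ (1 : Matrix n n R) = 1 := by
  simp [twistedTranspose]

theorem twistedTranspose_surjective : Function.Surjective (twistedTranspose (n := n) σ) :=
  fun y => ⟨yᵀ.map σ.symm, by ext; simp [twistedTranspose]⟩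

variable [Fintype n] [DecidableEq n] {σ}

theorem twistedTranspose_conj {U A : (Matrix n n R)ˣ}
    (h : twistedTranspose σ (U : Matrix n n R) * U = A) (x : Matrix n n R) :
    twistedTranspose σ (U * x * U⁻¹ : Matrix n n R) =
      (U * (A⁻¹ * twistedTranspose σ x * A) * U⁻¹ : Matrix n n R) := by
  have hU : twistedTranspose σ (U : Matrix n n R) = (A * U⁻¹ : Matrix n n R) := by
    rw [← h, Matrix.mul_assoc, Units.mul_inv, Matrix.mul_one]
  have hUinv : twistedTranspose σ ↑U⁻¹ = (U * A⁻¹ : Matrix n n R) := by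
    calc twistedTranspose σ ↑U⁻¹
        = twistedTranspose σ ↑U⁻¹ * twistedTranspose σ ↑U * (U * A⁻¹ : Matrix n n R) := by
          simp [hU, Matrix.mul_assoc]
      _ = (U * A⁻¹ : Matrix n n R) := by
          rw [← twistedTranspose_mul, Units.mul_inv, twistedTranspose_one, Matrix.one_mul]
  rw [twistedTranspose_mul, twistedTranspose_mul, hU, hUinv]
  simp only [Matrix.mul_assoc]

theorem image_twistedTranspose_conj {U A : (Matrix n n R)ˣ}
    (h : twistedTranspose σ (U : Matrix n n R) * U = A) {S : Set (Matrix n n R)}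
    (hS : (fun x : Matrix n n R => (A⁻¹ * twistedTranspose σ x * A : Matrix n n R)) '' S = S) :
    twistedTranspose σ '' ((fun x => (U * x * U⁻¹ : Matrix n n R)) '' S) =
      (fun x => (U * x * U⁻¹ : Matrix n n R)) '' S := by
  conv_rhs => rw [← hS]
  rw [Set.image_image, Set.image_image]
  congr 1
  funext x
  exact twistedTranspose_conj h x

end TwistedTranspose

end Matrix

section Gram

variable {R : Type*} [CommRing R] {c d : R}

theorem transpose_mul_self_of_sq_add_sq_eq_neg_one (hcd : c ^ 2 + d ^ 2 = -1) :
    (!![c, d; d, -c])ᵀ * !![c, d; d, -c] = -1 := by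
  ext i j
  fin_cases i <;> fin_cases j <;> simp [Matrix.mul_apply, Fin.sum_univ_two] <;>
    first | ring1 | linear_combination hcd

theorem exists_transpose_mul_self_eq_neg_one (hcd : c ^ 2 + d ^ 2 = -1) {ι : Type*}
    [Fintype ι] [DecidableEq ι] (h : Even (Fintype.card ι)) :
    ∃ N : Matrix ι ι R, Nᵀ * N = -1 := by
  obtain ⟨j, hj⟩ := h
  let e : ι ≃ Fin 2 × Fin j := Fintype.equivOfCardEq (by simp; omega)
  refine ⟨(blockDiagonal fun _ => !![c, d; d, -c]).submatrix e e, ?_⟩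
  rw [transpose_submatrix, submatrix_mul_equiv, blockDiagonal_transpose, ← blockDiagonal_mul]
  simp only [transpose_mul_self_of_sq_add_sq_eq_neg_one hcd]
  rw [show (fun _ => -1 : Fin j → Matrix (Fin 2) (Fin 2) R) = -1 from rfl, blockDiagonal_neg,
    blockDiagonal_one, submatrix_neg, Pi.neg_apply, Pi.neg_apply, submatrix_one_equiv]

theorem exists_transpose_mul_self_eq_diagonal (hcd : c ^ 2 + d ^ 2 = -1) (κ : Type*)
    [Fintype κ] [DecidableEq κ] :
    ∃ (H : Matrix (κ ⊕ Fin 1) (κ ⊕ Fin 1) R) (ε : R), (ε = 1 ∨ ε = -1) ∧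
      Hᵀ * H = diagonal (Sum.elim (fun _ => -1) fun _ => ε) := by
  rcases Nat.even_or_odd (Fintype.card κ) with hκ | hκ
  · obtain ⟨N, hN⟩ := exists_transpose_mul_self_eq_neg_one hcd hκ
    refine ⟨fromBlocks N 0 0 1, 1, Or.inl rfl, ?_⟩
    rw [← fromBlocks_diagonal]
    simp [fromBlocks_transpose, fromBlocks_multiply, hN]
    rw [← diagonal_one, diagonal_neg]
  · obtain ⟨N, hN⟩ := exists_transpose_mul_self_eq_neg_one hcd (ι := κ ⊕ Fin 1)
      (by simpa using hκ.add_one)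
    refine ⟨N, -1, Or.inr rfl, ?_⟩
    rw [hN, ← diagonal_one, diagonal_neg]
    congr 1
    ext (i | i) <;> rfl

/-- `B = Q P`, where `ᵗQ Q = diag(1, -1, ε)` and `P = !![1, 1; 1, -1] ⊕ 1` (blockwise) turns each
pair `⟨1⟩ ⊕ ⟨-1⟩` into a hyperbolic plane. -/
theorem exists_transpose_mul_self_eq_fromBlocks (hcd : c ^ 2 + d ^ 2 = -1) (κ : Type*)
    [Fintype κ] [DecidableEq κ] :
    ∃ (B : Matrix ((κ ⊕ κ) ⊕ Fin 1) ((κ ⊕ κ) ⊕ Fin 1) R) (ε : R), (ε = 1 ∨ ε = -1) ∧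
      Bᵀ * B = fromBlocks (fromBlocks 0 2 2 0) 0 0 (diagonal fun _ => ε) := by
  obtain ⟨H, ε, hε, hH⟩ := exists_transpose_mul_self_eq_diagonal hcd κ
  let e := Equiv.sumAssoc κ κ (Fin 1)
  let Q := (fromBlocks 1 0 0 H).submatrix e e
  let P : Matrix ((κ ⊕ κ) ⊕ Fin 1) ((κ ⊕ κ) ⊕ Fin 1) R :=
    fromBlocks (fromBlocks 1 1 1 (-1)) 0 0 1
  have hQ : Qᵀ * Q = fromBlocks (fromBlocks 1 0 0 (-1)) 0 0 (diagonal fun _ => ε) := by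
    rw [transpose_submatrix, submatrix_mul_equiv]
    simp only [fromBlocks_transpose, fromBlocks_multiply, hH]
    ext ((i | i) | i) ((j | j) | j) <;> simp [e, diagonal_apply, one_apply]
    split_ifs <;> simp
  refine ⟨Q * P, ε, hε, ?_⟩
  rw [transpose_mul, Matrix.mul_assoc, ← Matrix.mul_assoc Qᵀ, hQ]
  simp [P, fromBlocks_transpose, fromBlocks_multiply, one_add_one_eq_two]

def pairEquiv (m : ℕ) : (Fin m ⊕ Fin m) ⊕ Fin 1 ≃ Fin (m + (m + 1)) :=
  (Equiv.sumAssoc _ _ _).trans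
    ((Equiv.sumCongr (Equiv.refl _) (finSumFinEquiv.trans Fin.revPerm)).trans finSumFinEquiv)

theorem rev_pairEquiv {m : ℕ} (x : (Fin m ⊕ Fin m) ⊕ Fin 1) :
    Fin.rev (pairEquiv m x) = pairEquiv m (Sum.map Sum.swap id x) := by
  rcases x with (i | i) | i <;> ext <;> simp [pairEquiv] <;> omega

theorem fromBlocks_submatrix_pairEquiv (m : ℕ) (ε : R) :
    (fromBlocks (fromBlocks 0 2 2 0) 0 0 (diagonal fun _ => ε)).submatrix (pairEquiv m).symm
      (pairEquiv m).symm =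
      antidiagonal fun i => Sum.elim (fun _ => 2) (fun _ => ε) ((pairEquiv m).symm i) := by
  ext i j
  obtain ⟨x, rfl⟩ := (pairEquiv m).surjective i
  obtain ⟨y, rfl⟩ := (pairEquiv m).surjective j
  simp only [submatrix_apply, Equiv.symm_apply_apply, antidiagonal, of_apply, rev_pairEquiv,
    (pairEquiv m).injective.eq_iff]
  rcases x with (s | s) | s <;> rcases y with (t | t) | t <;>
    simp [diagonal, ofNat_apply, eq_comm]

theorem exists_transpose_mul_self_eq_antidiagonal (hcd : c ^ 2 + d ^ 2 = -1) (m : ℕ) :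
    ∃ (B : Matrix (Fin (m + (m + 1))) (Fin (m + (m + 1))) R) (a : Fin (m + (m + 1)) → R),
      (∀ i, a i = 2 ∨ a i = 1 ∨ a i = -1) ∧ Bᵀ * B = antidiagonal a := by
  obtain ⟨B, ε, hε, hB⟩ := exists_transpose_mul_self_eq_fromBlocks hcd (Fin m)
  refine ⟨B.submatrix (pairEquiv m).symm (pairEquiv m).symm,
    fun i => Sum.elim (fun _ => 2) (fun _ => ε) ((pairEquiv m).symm i), fun i => ?_, ?_⟩
  · dsimp only
    rcases (pairEquiv m).symm i with _ | _
    · simp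
    · simpa using Or.inr hε
  · rw [transpose_submatrix, submatrix_mul_equiv, hB, fromBlocks_submatrix_pairEquiv]

end Gram

/-- Built over the fixed field of `σ`, the matrix satisfies `σ(ᵗB) = ᵗB`. -/
theorem exists_twistedTranspose_mul_self_eq_antidiagonal {F : Type*} [Field F] (σ : F ≃+* F)
    {c d : F} (hc : σ c = c) (hd : σ d = d) (hcd : c ^ 2 + d ^ 2 = -1) (m : ℕ) :
    ∃ (B : Matrix (Fin (m + (m + 1))) (Fin (m + (m + 1))) F) (a : Fin (m + (m + 1)) → F),
      (∀ i, a i = 2 ∨ a i = 1 ∨ a i = -1) ∧ twistedTranspose σ B * B = antidiagonal a := by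
  let F₀ := RingHom.eqLocusField (σ : F →+* F) (RingHom.id F)
  obtain ⟨B, a, ha, hB⟩ := exists_transpose_mul_self_eq_antidiagonal (R := F₀)
    (c := ⟨c, hc⟩) (d := ⟨d, hd⟩) (Subtype.ext (by simpa using hcd)) m
  refine ⟨B.map F₀.subtype, F₀.subtype ∘ a, fun i => ?_, ?_⟩
  · rcases ha i with h | h | h <;>
      simp only [Function.comp_apply, h, map_ofNat, map_one, map_neg] <;> tauto
  have hfix : twistedTranspose σ (B.map F₀.subtype) = (B.map F₀.subtype)ᵀ := by
    ext i j
    exact (B j i).2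
  rw [hfix, ← transpose_map, ← Matrix.map_mul, hB]
  ext i j
  simp only [antidiagonal, map_apply, of_apply]
  split_ifs <;> simp

section Iwahori

variable {R Γ₀ : Type*} [CommRing R] [LinearOrderedCommGroupWithZero Γ₀] (v : Valuation R Γ₀)

def iwahoriOrder (n : ℕ) : Set (Matrix (Fin n) (Fin n) R) :=
  {x | ∀ i j, (i ≤ j → v (x i j) ≤ 1) ∧ (j < i → v (x i j) < 1)}

variable {v} {n : ℕ}

theorem mem_iwahoriOrder_iff_of_valuation_eq {x y : Matrix (Fin n) (Fin n) R}
    (h : ∀ i j, v (y i j) = v (x (Fin.rev j) (Fin.rev i))) :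
    y ∈ iwahoriOrder v n ↔ x ∈ iwahoriOrder v n := by
  simp only [iwahoriOrder, Set.mem_ofPred_eq, h]
  constructor
  · intro hy i j
    simpa [Fin.rev_le_rev, Fin.rev_lt_rev] using hy (Fin.rev j) (Fin.rev i)
  · intro hx i j
    exact ⟨fun hij => (hx _ _).1 (Fin.rev_le_rev.mpr hij),
      fun hij => (hx _ _).2 (Fin.rev_lt_rev.mpr hij)⟩

theorem valuation_conj_antidiagonal {a : Fin n → R} (ha : ∀ i, v (a i) = 1)
    {A : (Matrix (Fin n) (Fin n) R)ˣ} (hA : A = antidiagonal a) (x : Matrix (Fin n) (Fin n) R)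
    (i j : Fin n) :
    v ((A⁻¹ * x * A : Matrix (Fin n) (Fin n) R) i j) = v (x (Fin.rev i) (Fin.rev j)) := by
  have hcomm : (A * (A⁻¹ * x * A) : Matrix (Fin n) (Fin n) R) = x * A := by
    rw [← Matrix.mul_assoc, ← Matrix.mul_assoc, Units.mul_inv, Matrix.one_mul]
  have hentry := congrArg (fun M : Matrix (Fin n) (Fin n) R => v (M (Fin.rev i) j)) hcomm
  simpa [hA, antidiagonal_mul_apply, mul_antidiagonal_apply, ha] using hentry

theorem image_iwahoriOrder_conj_antidiagonal {σ : R ≃+* R} (hσv : ∀ x, v (σ x) = v x)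
    {a : Fin n → R} (ha : ∀ i, v (a i) = 1) {A : (Matrix (Fin n) (Fin n) R)ˣ}
    (hA : A = antidiagonal a) :
    (fun x : Matrix (Fin n) (Fin n) R =>
      (A⁻¹ * twistedTranspose σ x * A : Matrix (Fin n) (Fin n) R)) '' iwahoriOrder v n =
      iwahoriOrder v n := by
  set φ := fun x : Matrix (Fin n) (Fin n) R =>
    (A⁻¹ * twistedTranspose σ x * A : Matrix (Fin n) (Fin n) R)
  have hsurj : Function.Surjective φ := by
    intro y
    obtain ⟨x, hx⟩ := twistedTranspose_surjective σ (A * y * A⁻¹ : Matrix (Fin n) (Fin n) R)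
    exact ⟨x, by simp [φ, hx, Matrix.mul_assoc]⟩
  have hpre : φ ⁻¹' iwahoriOrder v n = iwahoriOrder v n :=
    Set.ext fun x => mem_iwahoriOrder_iff_of_valuation_eq fun i j => by
      rw [valuation_conj_antidiagonal ha hA]
      simp [twistedTranspose, hσv]
  calc φ '' iwahoriOrder v n = φ '' (φ ⁻¹' iwahoriOrder v n) := by rw [hpre]
    _ = iwahoriOrder v n := hsurj.image_preimage _

end Iwahori

theorem stmt_4_general
    (p : ℕ) (hp : p.Prime) (hp2 : p ≠ 2)
    (F : Type*) [Field F] [Valued F ℤᵐ⁰] [CompleteSpace F]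
    (hcharres : CharP (IsLocalRing.ResidueField
      ((Valued.v : Valuation F ℤᵐ⁰).valuationSubring)) p)
    (σ : F ≃+* F)
    (hσv : ∀ x : F, Valued.v (σ x) = Valued.v x)
    (n : ℕ) (hnodd : Odd n)
    (𝔞 : Set (Matrix (Fin n) (Fin n) F))
    (h𝔞 : 𝔞 = {x | ∀ i j : Fin n,
      (i ≤ j → Valued.v (x i j) ≤ 1) ∧ (j < i → Valued.v (x i j) < 1)}) :
    ∃ (g₁ : (Matrix (Fin n) (Fin n) F)ˣ) (a : Fin n → F),
      (∀ i, Valued.v (a i) = 1) ∧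
      ((((g₁⁻¹ : (Matrix (Fin n) (Fin n) F)ˣ) : Matrix (Fin n) (Fin n) F)ᵀ).map σ) *
          ((g₁⁻¹ : (Matrix (Fin n) (Fin n) F)ˣ) : Matrix (Fin n) (Fin n) F)
        = Matrix.of (fun i j => if j = Fin.rev i then a i else 0) ∧
      (fun x : Matrix (Fin n) (Fin n) F => (xᵀ).map σ) ''
          ((fun x => ((g₁⁻¹ : (Matrix (Fin n) (Fin n) F)ˣ) : Matrix (Fin n) (Fin n) F) * x *
            (g₁ : Matrix (Fin n) (Fin n) F)) '' 𝔞)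
        = (fun x => ((g₁⁻¹ : (Matrix (Fin n) (Fin n) F)ˣ) : Matrix (Fin n) (Fin n) F) * x *
            (g₁ : Matrix (Fin n) (Fin n) F)) '' 𝔞 := by
  have := Fact.mk hp
  obtain ⟨c, d, hc, hd, hcd⟩ := exists_fixed_sq_add_sq_eq_neg_one p hp2 σ hσv
  obtain ⟨m, rfl⟩ : ∃ m, n = m + (m + 1) := by
    obtain ⟨m, hm⟩ := hnodd
    exact ⟨m, by omega⟩
  obtain ⟨B, a, ha, hB⟩ := exists_twistedTranspose_mul_self_eq_antidiagonal σ hc hd hcd m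
  have h2 := (Valued.v : Valuation F ℤᵐ⁰).map_two_eq_one hp2
  have hva : ∀ i, Valued.v (a i) = 1 := fun i => by
    rcases ha i with h | h | h <;> simp [h, h2]
  obtain ⟨A, hA⟩ := isUnit_antidiagonal (a := a) fun i =>
    isUnit_iff_ne_zero.mpr fun h => by simpa [h] using hva i
  obtain ⟨U, rfl⟩ : IsUnit B := by
    rw [isUnit_iff_isUnit_det]
    refine isUnit_of_mul_isUnit_right (x := (twistedTranspose σ B).det) ?_
    rw [← det_mul, hB, ← isUnit_iff_isUnit_det]
    exact ⟨A, hA⟩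
  refine ⟨U⁻¹, a, hva, ?_, ?_⟩ <;> rw [inv_inv]
  · exact hB
  · subst h𝔞
    exact image_twistedTranspose_conj (hB.trans hA.symm)
      (image_iwahoriOrder_conj_antidiagonal (v := Valued.v) hσv hva hA)

/-- **Lemma.** Let `F/F₀` be a quadratic extension of nonarchimedean locally compact fields of
residue characteristic `p ≠ 2` with nontrivial automorphism `σ`, let `n` be odd and `𝔞` the
standard Iwahori order of `M_n(F)`.  Then there are `g₁ ∈ GL_n(F)` and units
`a₁, …, a_n ∈ o_F^×` with `σ(ᵗg₁⁻¹)·g₁⁻¹ = A`, `A` the antidiagonal matrix with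
`(i, n+1−i)` entry `a_i`, and `σ(ᵗ(g₁⁻¹𝔞g₁)) = g₁⁻¹𝔞g₁`. -/
theorem stmt_4
    (p : ℕ) (hp : p.Prime) (hp2 : p ≠ 2)
    (F : Type*) [Field F] [Valued F ℤᵐ⁰] [CompleteSpace F]
    (hdisc : Function.Surjective (fun x : F => (Valued.v x : ℤᵐ⁰)))
    (hfinres : Finite (IsLocalRing.ResidueField
      ((Valued.v : Valuation F ℤᵐ⁰).valuationSubring)))
    (hcharres : CharP (IsLocalRing.ResidueField
      ((Valued.v : Valuation F ℤᵐ⁰).valuationSubring)) p)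
    (σ : F ≃+* F) (hσ2 : ∀ x, σ (σ x) = x) (hσne : σ ≠ RingEquiv.refl F)
    (hσv : ∀ x : F, Valued.v (σ x) = Valued.v x)
    (n : ℕ) (hnodd : Odd n) (hnpos : 0 < n)
    (𝔞 : Set (Matrix (Fin n) (Fin n) F))
    (h𝔞 : 𝔞 = {x | ∀ i j : Fin n,
      (i ≤ j → Valued.v (x i j) ≤ 1) ∧ (j < i → Valued.v (x i j) < 1)}) :
    ∃ (g₁ : (Matrix (Fin n) (Fin n) F)ˣ) (a : Fin n → F),
      (∀ i, Valued.v (a i) = 1) ∧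
      ((((g₁⁻¹ : (Matrix (Fin n) (Fin n) F)ˣ) : Matrix (Fin n) (Fin n) F)ᵀ).map σ) *
          ((g₁⁻¹ : (Matrix (Fin n) (Fin n) F)ˣ) : Matrix (Fin n) (Fin n) F)
        = Matrix.of (fun i j => if j = Fin.rev i then a i else 0) ∧
      (fun x : Matrix (Fin n) (Fin n) F => (xᵀ).map σ) ''
          ((fun x => ((g₁⁻¹ : (Matrix (Fin n) (Fin n) F)ˣ) : Matrix (Fin n) (Fin n) F) * x *
            (g₁ : Matrix (Fin n) (Fin n) F)) '' 𝔞)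
        = (fun x => ((g₁⁻¹ : (Matrix (Fin n) (Fin n) F)ˣ) : Matrix (Fin n) (Fin n) F) * x *
            (g₁ : Matrix (Fin n) (Fin n) F)) '' 𝔞 :=
  stmt_4_general p hp hp2 F hcharres σ hσv n hnodd 𝔞 h𝔞
end

section
/- Let F/F₀ be a quadratic extension of nonarchimedean locally compact fields of residue characteristic p ≠ 2, with nontrivial automorphism σ, ring of integers o_F and maximal ideal p_F. Let n be an odd positive integer and let 𝔞 ⊆ M_n(F) be the standard Iwahori order (matrices x with x_{ij} ∈ o_F for i ≤ j and x_{ij} ∈ p_F for i > j), with radical 𝔭_𝔞 (matrices x with x_{ij} ∈ o_F for i < j and x_{ij} ∈ p_F for i ≥ j); set U(𝔞) = 𝔞^× (invertible elements of 𝔞 whose inverse lies in 𝔞) and U¹(𝔞) = I_n + 𝔭_𝔞. Let A be the antidiagonal matrix with (i, n+1−i) entry a_i ∈ o_F^×, where a_i = σ(a_{n+1−i}) for all i (so A is hermitian). Let u ∈ U(𝔞) satisfy u·A⁻¹·σ(ᵗu⁻¹)·A ∈ o_F^×·U¹(𝔞). Then there exists a diagonal matrix y = diag(y₁, …, y_n)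 with all y_i ∈ o_F^× such that u·A⁻¹·σ(ᵗy⁻¹)·A·y⁻¹ ∈ o_F^×·U¹(𝔞). -/
open Matrix

local notation "ℤᵐ⁰" => WithZero (Multiplicative ℤ)

/-- **Lemma.** Setting: `F/F₀` a quadratic extension of nonarchimedean locally compact fields
of residue characteristic `p ≠ 2` with nontrivial automorphism `σ`; `n` odd; `𝔞` the standard
Iwahori order with radical `𝔭_𝔞`, `U(𝔞) = 𝔞^×`, `U¹(𝔞) = 1 + 𝔭_𝔞`; `A` the hermitian
antidiagonal matrix with entries `a_i ∈ o_F^×`, `a_i = σ(a_{n+1-i})`.  If `u ∈ U(𝔞)`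
satisfies `u·A⁻¹·σ(ᵗu⁻¹)·A ∈ o_F^×·U¹(𝔞)`, then there is a diagonal matrix
`y = diag(y₁, …, y_n)` with `y_i ∈ o_F^×` such that `u·A⁻¹·σ(ᵗy⁻¹)·A·y⁻¹ ∈ o_F^×·U¹(𝔞)`. -/
theorem stmt_5
    (p : ℕ) (hp : p.Prime) (hp2 : p ≠ 2)
    (F : Type*) [Field F] [Valued F ℤᵐ⁰] [CompleteSpace F]
    (hdisc : Function.Surjective (fun x : F => (Valued.v x : ℤᵐ⁰)))
    (hfinres : Finite (IsLocalRing.ResidueField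
      ((Valued.v : Valuation F ℤᵐ⁰).valuationSubring)))
    (hcharres : CharP (IsLocalRing.ResidueField
      ((Valued.v : Valuation F ℤᵐ⁰).valuationSubring)) p)
    (σ : F ≃+* F) (hσ2 : ∀ x, σ (σ x) = x) (hσne : σ ≠ RingEquiv.refl F)
    (hσv : ∀ x : F, Valued.v (σ x) = Valued.v x)
    (n : ℕ) (hnodd : Odd n) (hnpos : 0 < n)
    -- the standard Iwahori order and its radical
    (𝔞 : Set (Matrix (Fin n) (Fin n) F))
    (h𝔞 : 𝔞 = {x | ∀ i j : Fin n,
      (i ≤ j → Valued.v (x i j) ≤ 1) ∧ (j < i → Valued.v (x i j) < 1)})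
    (𝔭𝔞 : Set (Matrix (Fin n) (Fin n) F))
    (h𝔭𝔞 : 𝔭𝔞 = {x | ∀ i j : Fin n,
      (i < j → Valued.v (x i j) ≤ 1) ∧ (j ≤ i → Valued.v (x i j) < 1)})
    -- the hermitian antidiagonal matrix `A`
    (a : Fin n → F) (ha : ∀ i, Valued.v (a i) = 1)
    (hasym : ∀ i, a i = σ (a (Fin.rev i)))
    (A : Matrix (Fin n) (Fin n) F)
    (hA : A = Matrix.of (fun i j => if j = Fin.rev i then a i else 0))
    -- `u ∈ U(𝔞)`
    (u : Matrix (Fin n) (Fin n) F) (hu𝔞 : u ∈ 𝔞) (hu : IsUnit u) (huinv : u⁻¹ ∈ 𝔞)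
    -- `u·A⁻¹·σ(ᵗu⁻¹)·A ∈ o_F^×·U¹(𝔞)`
    (hucond : ∃ c : F, Valued.v c = 1 ∧ ∃ w : Matrix (Fin n) (Fin n) F, w - 1 ∈ 𝔭𝔞 ∧
      u * A⁻¹ * ((u⁻¹)ᵀ.map σ) * A = c • w) :
    ∃ y : Matrix (Fin n) (Fin n) F,
      (∀ i j : Fin n, i ≠ j → y i j = 0) ∧
      (∀ i : Fin n, Valued.v (y i i) = 1) ∧
      ∃ c : F, Valued.v c = 1 ∧ ∃ w : Matrix (Fin n) (Fin n) F, w - 1 ∈ 𝔭𝔞 ∧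
        u * A⁻¹ * ((y⁻¹)ᵀ.map σ) * A * y⁻¹ = c • w := by
  classical
  set v : Valuation F ℤᵐ⁰ := (Valued.v : Valuation F ℤᵐ⁰) with hvdef
  obtain ⟨k, hk⟩ := hnodd
  -- basic valuation helpers
  have vne : ∀ x : F, v x = 1 → x ≠ 0 := by
    intro x hx h0; rw [h0, _root_.map_zero] at hx; exact zero_ne_one hx
  have vmul : ∀ x y : F, v x = 1 → v y = 1 → v (x * y) = 1 := by
    intro x y hx hy; rw [_root_.map_mul, hx, hy, one_mul]
  have vinv : ∀ x : F, v x = 1 → v x⁻¹ = 1 := by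
    intro x hx; rw [map_inv₀, hx, inv_one]
  have vmul_lt : ∀ x y : F, v x < 1 → v y ≤ 1 → v (x * y) < 1 := by
    intro x y hx hy
    rw [_root_.map_mul]
    calc v x * v y ≤ v x * 1 := mul_le_mul_right hy _
    _ = v x := mul_one _
    _ < 1 := hx
  have vmul_lt' : ∀ x y : F, v x ≤ 1 → v y < 1 → v (x * y) < 1 := by
    intro x y hx hy; rw [mul_comm]; exact vmul_lt y x hy hx
  have vadd_lt : ∀ x y : F, v x < 1 → v y < 1 → v (x + y) < 1 := by
    intro x y hx hy; exact lt_of_le_of_lt (v.map_add x y) (max_lt hx hy)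
  have vsub_tri : ∀ x y z : F, v (x - y) < 1 → v (y - z) < 1 → v (x - z) < 1 := by
    intro x y z h1 h2
    have h : x - z = (x - y) + (y - z) := by ring
    rw [h]; exact vadd_lt _ _ h1 h2
  have vone_of_near : ∀ x : F, v (x - 1) < 1 → v x = 1 := by
    intro x hx
    have hle : v x ≤ 1 := by
      have h : x = (x - 1) + 1 := by ring
      rw [h]
      exact le_trans (v.map_add _ _) (max_le (le_of_lt hx) (le_of_eq (_root_.map_one v)))
    rcases lt_or_eq_of_le hle with hlt | heq
    · exfalso
      have h : (1 : F) = x - (x - 1) := by ring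
      have : (1 : ℤᵐ⁰) ≤ max (v x) (v (x - 1)) := by
        calc (1 : ℤᵐ⁰) = v 1 := (_root_.map_one v).symm
        _ = v (x - (x - 1)) := by rw [← h]
        _ ≤ max (v x) (v (x - 1)) := v.map_sub _ _
      exact absurd this (not_le_of_gt (max_lt hlt hx))
    · exact heq
  -- the middle index
  have hm2 : n / 2 < n := by omega
  set m : Fin n := ⟨n / 2, hm2⟩ with hmdef
  have hmrev : Fin.rev m = m := by
    apply Fin.ext
    simp only [Fin.val_rev, hmdef]
    omega
  have hfixm : ∀ i : Fin n, Fin.rev i = i → i = m := by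
    intro i h
    apply Fin.ext
    have := congrArg Fin.val h
    simp only [Fin.val_rev] at this
    have hi := i.isLt
    simp only [hmdef]
    omega
  -- unfold memberships
  rw [h𝔞] at hu𝔞 huinv
  have hu' : ∀ i j : Fin n, (i ≤ j → v (u i j) ≤ 1) ∧ (j < i → v (u i j) < 1) := hu𝔞
  have hui' : ∀ i j : Fin n, (i ≤ j → v (u⁻¹ i j) ≤ 1) ∧ (j < i → v (u⁻¹ i j) < 1) := huinv
  have haz : ∀ i, a i ≠ 0 := fun i => vne _ (ha i)
  -- explicit inverse of A
  set B : Matrix (Fin n) (Fin n) F :=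
    Matrix.of (fun i j => if j = Fin.rev i then (a (Fin.rev i))⁻¹ else 0) with hB
  have hAapp : ∀ l r : Fin n, A l r = if l = Fin.rev r then a l else 0 := by
    intro l r
    rw [hA]
    simp only [Matrix.of_apply]
    by_cases h : l = Fin.rev r
    · rw [if_pos h, if_pos (by rw [h, Fin.rev_rev])]
    · rw [if_neg h, if_neg (fun hr => h (by rw [hr, Fin.rev_rev]))]
  have hABone : A * B = 1 := by
    ext i r
    rw [Matrix.mul_apply]
    rw [Finset.sum_eq_single (Fin.rev i)]
    · simp only [hA, hB, Matrix.of_apply, Fin.rev_rev, if_pos rfl]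
      by_cases h : r = i
      · simp [h, mul_inv_cancel₀ (haz i), Matrix.one_apply]
      · have : r ≠ i := h
        simp [Matrix.one_apply, h, Ne.symm h]
    · intro b _ hb
      rw [hA]
      simp only [Matrix.of_apply]
      rw [if_neg hb, zero_mul]
    · intro h; exact absurd (Finset.mem_univ _) h
  have hAinv : A⁻¹ = B := inv_eq_right_inv hABone
  -- conjugation entry formula
  have hconj : ∀ (X : Matrix (Fin n) (Fin n) F) (i r : Fin n),
      (B * X * A) i r = (a (Fin.rev i))⁻¹ * X (Fin.rev i) (Fin.rev r) * a (Fin.rev r) := by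
    intro X i r
    have hBX : ∀ l, (B * X) i l = (a (Fin.rev i))⁻¹ * X (Fin.rev i) l := by
      intro l
      rw [Matrix.mul_apply]
      rw [Finset.sum_eq_single (Fin.rev i)]
      · simp [hB]
      · intro b _ hb; simp [hB, hb]
      · intro h; exact absurd (Finset.mem_univ _) h
    rw [Matrix.mul_apply]
    rw [Finset.sum_eq_single (Fin.rev r)]
    · rw [hBX, hAapp, if_pos rfl]
    · intro b _ hb
      rw [hAapp, if_neg hb, mul_zero]
    · intro h; exact absurd (Finset.mem_univ _) h
  -- diagonal entries of u, u⁻¹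
  set d : Fin n → F := fun i => u i i with hd
  set e : Fin n → F := fun i => u⁻¹ i i with he
  have huu : u * u⁻¹ = 1 := Matrix.mul_nonsing_inv u ((Matrix.isUnit_iff_isUnit_det u).mp hu)
  have hde : ∀ i : Fin n, v (d i * e i - 1) < 1 := by
    intro i
    have h1 : ∑ j, u i j * u⁻¹ j i = 1 := by
      rw [← Matrix.mul_apply, huu, Matrix.one_apply_eq]
    have h2 : ∑ j, u i j * u⁻¹ j i
        = (∑ j ∈ Finset.univ \ {i}, u i j * u⁻¹ j i) + d i * e i :=
      Finset.sum_eq_sum_sdiff_singleton_add (Finset.mem_univ i) _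
    have h3 : d i * e i - 1 = -(∑ j ∈ Finset.univ \ {i}, u i j * u⁻¹ j i) := by
      rw [← h1, h2]; ring
    rw [h3, Valuation.map_neg]
    apply Valuation.map_sum_lt v one_ne_zero
    intro j hj
    have hji : j ≠ i := by
      simp only [Finset.mem_sdiff, Finset.mem_singleton] at hj
      exact hj.2
    rcases lt_or_gt_of_ne hji with hlt | hgt
    · exact vmul_lt _ _ ((hu' i j).2 hlt) ((hui' j i).1 (le_of_lt hlt))
    · exact vmul_lt' _ _ ((hu' i j).1 (le_of_lt hgt)) ((hui' j i).2 hgt)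
  have hdv : ∀ i : Fin n, v (d i) = 1 := by
    intro i
    have hprod : v (d i * e i) = 1 := vone_of_near _ (hde i)
    by_contra h
    have hlt : v (d i) < 1 := lt_of_le_of_ne ((hu' i i).1 le_rfl) h
    exact absurd hprod (ne_of_lt (vmul_lt _ _ hlt ((hui' i i).1 le_rfl)))
  have hev : ∀ i : Fin n, v (e i) = 1 := by
    intro i
    have hprod : v (d i * e i) = 1 := vone_of_near _ (hde i)
    by_contra h
    have hlt : v (e i) < 1 := lt_of_le_of_ne ((hui' i i).1 le_rfl) h
    exact absurd hprod (ne_of_lt (vmul_lt' _ _ ((hu' i i).1 le_rfl) hlt))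
  -- the key diagonal estimate from the hypothesis
  obtain ⟨c, hc, w, hw, hMeq⟩ := hucond
  rw [h𝔭𝔞] at hw
  have hK : ∀ i : Fin n, v (d i * σ (e (Fin.rev i)) - c) < 1 := by
    intro i
    set P : Matrix (Fin n) (Fin n) F := (u⁻¹)ᵀ.map σ with hP
    have hN : ∀ j r : Fin n, (B * P * A) j r
        = (a (Fin.rev j))⁻¹ * σ (u⁻¹ (Fin.rev r) (Fin.rev j)) * a (Fin.rev r) := by
      intro j r
      rw [hconj, hP, Matrix.map_apply, Matrix.transpose_apply]
    have hMi : (u * A⁻¹ * P * A) i i = ∑ j, u i j * (B * P * A) j i := by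
      rw [hAinv, mul_assoc, mul_assoc, ← mul_assoc B P A, Matrix.mul_apply]
    -- main term
    have hmain : u i i * (B * P * A) i i = d i * σ (e (Fin.rev i)) := by
      rw [hN, mul_comm ((a (Fin.rev i))⁻¹) (σ (u⁻¹ (Fin.rev i) (Fin.rev i))), mul_assoc,
        inv_mul_cancel₀ (haz (Fin.rev i)), mul_one]
    have hsplit : (u * A⁻¹ * P * A) i i - d i * σ (e (Fin.rev i))
        = ∑ j ∈ Finset.univ \ {i}, u i j * (B * P * A) j i := by
      rw [hMi, Finset.sum_eq_sum_sdiff_singleton_add (Finset.mem_univ i)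
        (fun j => u i j * (B * P * A) j i), hmain]
      ring
    have hstep1 : v ((u * A⁻¹ * P * A) i i - d i * σ (e (Fin.rev i))) < 1 := by
      rw [hsplit]
      apply Valuation.map_sum_lt v one_ne_zero
      intro j hj
      have hji : j ≠ i := by
        simp only [Finset.mem_sdiff, Finset.mem_singleton] at hj
        exact hj.2
      have hNv : v ((B * P * A) j i) = v (u⁻¹ (Fin.rev i) (Fin.rev j)) := by
        rw [hN, _root_.map_mul, _root_.map_mul, map_inv₀, ha, ha, hσv, inv_one, one_mul, mul_one]
      rcases lt_or_gt_of_ne hji with hlt | hgt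
      · -- j < i, so rev i < rev j
        have hrev : Fin.rev i ≤ Fin.rev j := le_of_lt (Fin.rev_lt_rev.mpr hlt)
        refine vmul_lt _ _ ((hu' i j).2 hlt) ?_
        rw [hNv]; exact (hui' _ _).1 hrev
      · -- i < j, so rev j < rev i
        have hrev : Fin.rev j < Fin.rev i := Fin.rev_lt_rev.mpr hgt
        refine vmul_lt' _ _ ((hu' i j).1 (le_of_lt hgt)) ?_
        rw [hNv]; exact (hui' _ _).2 hrev
    have hstep2 : v ((u * A⁻¹ * P * A) i i - c) < 1 := by
      have h1 : (u * A⁻¹ * P * A) i i = c * w i i := by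
        rw [hMeq, Matrix.smul_apply, smul_eq_mul]
      have h2 : v (w i i - 1) < 1 := by
        have := (hw i i).2 le_rfl
        rwa [Matrix.sub_apply, Matrix.one_apply_eq] at this
      have h3 : (u * A⁻¹ * P * A) i i - c = c * (w i i - 1) := by rw [h1]; ring
      rw [h3, _root_.map_mul, hc, one_mul]
      exact h2
    exact vsub_tri _ _ _ (by rw [Valuation.map_sub_swap]; exact hstep1) hstep2
  -- the diagonal correction matrix
  set g : Fin n → F := fun i => if i < Fin.rev i then d i * (d m)⁻¹ else 1 with hg
  have hgv : ∀ i, v (g i) = 1 := by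
    intro i
    by_cases h : i < Fin.rev i
    · rw [hg]; simp only [if_pos h]
      exact vmul _ _ (hdv i) (vinv _ (hdv m))
    · rw [hg]; simp only [if_neg h]; exact _root_.map_one v
  have hgne : ∀ i, g i ≠ 0 := fun i => vne _ (hgv i)
  have hdne : ∀ i, d i ≠ 0 := fun i => vne _ (hdv i)
  have hene : ∀ i, e i ≠ 0 := fun i => vne _ (hev i)
  have hσgne : ∀ i, σ (g i) ≠ 0 := by
    intro i h0
    exact hgne i (by simpa using congrArg σ.symm h0)
  have hscalar : ∀ i : Fin n, v (d i - d m * (σ (g (Fin.rev i)) * g i)) < 1 := by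
    intro i
    rcases lt_trichotomy i (Fin.rev i) with hlt | heq | hgt
    · -- i < rev i : exact cancellation
      have hgi : g i = d i * (d m)⁻¹ := by
        simp only [hg]
        rw [if_pos hlt]
      have hgr : g (Fin.rev i) = 1 := by
        simp only [hg, Fin.rev_rev]
        rw [if_neg (asymm hlt)]
      rw [hgi, hgr, _root_.map_one]
      have hz : d i - d m * (1 * (d i * (d m)⁻¹)) = 0 := by
        rw [one_mul, ← mul_assoc, mul_comm (d m) (d i), mul_assoc,
          mul_inv_cancel₀ (hdne m), mul_one, sub_self]
      rw [hz, _root_.map_zero]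
      exact zero_lt_one
    · -- i = rev i : i = m
      have him : i = m := hfixm i heq.symm
      have hgi : g i = 1 := by
        simp only [hg]
        rw [if_neg (show ¬ i < Fin.rev i by rw [← heq]; exact lt_irrefl i)]
      have hgr : g (Fin.rev i) = 1 := by rw [← heq, hgi]
      rw [hgi, hgr, _root_.map_one, him]
      have hz : d m - d m * (1 * 1) = 0 := by ring
      rw [hz, _root_.map_zero]
      exact zero_lt_one
    · -- rev i < i : the genuine estimate
      have hgi : g i = 1 := by
        simp only [hg]
        rw [if_neg (asymm hgt)]
      have hgr : g (Fin.rev i) = d (Fin.rev i) * (d m)⁻¹ := by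
        simp only [hg, Fin.rev_rev]
        rw [if_pos hgt]
      rw [hgi, hgr]
      set α := d i with hα
      set β := σ (d (Fin.rev i)) with hβ
      set γ := d m with hγ
      set δ := σ (d m) with hδ
      set ε := σ (e (Fin.rev i)) with hε
      set ζ := σ (e m) with hζ
      have hβv : v β = 1 := by rw [hβ, hσv]; exact hdv _
      have hδv : v δ = 1 := by rw [hδ, hσv]; exact hdv _
      have hεv : v ε = 1 := by rw [hε, hσv]; exact hev _
      have hζv : v ζ = 1 := by rw [hζ, hσv]; exact hev _
      have hδne : δ ≠ 0 := vne _ hδv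
      have hεne : ε ≠ 0 := vne _ hεv
      have hζne : ζ ≠ 0 := vne _ hζv
      have h1 : v (α * ε - c) < 1 := hK i
      have h2 : v (γ * ζ - c) < 1 := by
        have := hK m
        rwa [hmrev] at this
      have h3 : v (β * ε - 1) < 1 := by
        have hde' := hde (Fin.rev i)
        have hx : β * ε - 1 = σ (d (Fin.rev i) * e (Fin.rev i) - 1) := by
          rw [_root_.map_sub, _root_.map_mul, _root_.map_one, hβ, hε]
        rw [hx, hσv]
        exact hde'
      have h4 : v (δ * ζ - 1) < 1 := by
        have hde' := hde m
        have hx : δ * ζ - 1 = σ (d m * e m - 1) := by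
          rw [_root_.map_sub, _root_.map_mul, _root_.map_one, hδ, hζ]
        rw [hx, hσv]
        exact hde'
      have hident : α - γ * (σ (d (Fin.rev i) * γ⁻¹) * 1)
          = ((α * ε) * (ζ * δ) - (γ * ζ) * (β * ε)) * (ε * ζ * δ)⁻¹ := by
        rw [_root_.map_mul, map_inv₀, ← hβ, ← hδ]
        field_simp
      rw [hident]
      have hdecomp : (α * ε) * (ζ * δ) - (γ * ζ) * (β * ε)
          = (α * ε - c) * (ζ * δ) + c * (δ * ζ - 1) + (-c) * (β * ε - 1)
            + (c - γ * ζ) * (β * ε) := by ring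
      have hnum : v ((α * ε) * (ζ * δ) - (γ * ζ) * (β * ε)) < 1 := by
        rw [hdecomp]
        refine vadd_lt _ _ (vadd_lt _ _ (vadd_lt _ _ ?_ ?_) ?_) ?_
        · exact vmul_lt _ _ h1 (le_of_eq (vmul _ _ hζv hδv))
        · exact vmul_lt' _ _ (le_of_eq hc) h4
        · refine vmul_lt' _ _ ?_ h3
          rw [Valuation.map_neg]; exact le_of_eq hc
        · refine vmul_lt _ _ ?_ (le_of_eq (vmul _ _ hβv hεv))
          rw [Valuation.map_sub_swap]; exact h2
      rw [_root_.map_mul, vinv _ (vmul _ _ (vmul _ _ hεv hζv) hδv), mul_one]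
      exact hnum
  -- assemble the answer
  have hc' : v (d m) = 1 := hdv m
  have hYinv : (Matrix.diagonal g)⁻¹ = Matrix.diagonal (fun i => (g i)⁻¹) := by
    apply inv_eq_right_inv
    rw [Matrix.diagonal_mul_diagonal]
    have hx : (fun i => g i * (g i)⁻¹) = fun _ : Fin n => (1 : F) :=
      funext fun i => mul_inv_cancel₀ (hgne i)
    rw [hx, Matrix.diagonal_one]
  set hfun : Fin n → F := fun i => σ ((g (Fin.rev i))⁻¹) * (g i)⁻¹ with hh
  have hmid : B * Matrix.diagonal (fun i => σ ((g i)⁻¹)) * A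
      = Matrix.diagonal (fun i => σ ((g (Fin.rev i))⁻¹)) := by
    ext i r
    rw [hconj]
    by_cases hir : i = r
    · subst hir
      rw [Matrix.diagonal_apply_eq, Matrix.diagonal_apply_eq,
        mul_comm ((a (Fin.rev i))⁻¹) (σ ((g (Fin.rev i))⁻¹)), mul_assoc,
        inv_mul_cancel₀ (haz (Fin.rev i)), mul_one]
    · rw [Matrix.diagonal_apply_ne _ (fun hh' => hir (Fin.rev_injective hh')),
        Matrix.diagonal_apply_ne _ hir, mul_zero, zero_mul]
  have hT : u * A⁻¹ * (((Matrix.diagonal g)⁻¹)ᵀ.map σ) * A * (Matrix.diagonal g)⁻¹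
      = u * Matrix.diagonal hfun := by
    rw [hYinv, Matrix.diagonal_transpose, Matrix.diagonal_map (_root_.map_zero σ), hAinv]
    rw [mul_assoc u B _, mul_assoc u _ A, hmid]
    rw [mul_assoc, Matrix.diagonal_mul_diagonal]
  refine ⟨Matrix.diagonal g, ?_, ?_, d m, hc', (d m)⁻¹ • (u * Matrix.diagonal hfun), ?_, ?_⟩
  · intro i j hij
    exact Matrix.diagonal_apply_ne _ hij
  · intro i
    rw [Matrix.diagonal_apply_eq]
    exact hgv i
  · -- membership in 1 + 𝔭𝔞
    rw [h𝔭𝔞]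
    intro i j
    have hentry : ((d m)⁻¹ • (u * Matrix.diagonal hfun) - 1) i j
        = (d m)⁻¹ * (u i j * hfun j) - (1 : Matrix (Fin n) (Fin n) F) i j := by
      rw [Matrix.sub_apply, Matrix.smul_apply, Matrix.mul_diagonal, smul_eq_mul]
    have hhv : ∀ j, v (hfun j) = 1 := by
      intro j
      rw [hh]
      exact vmul _ _ (by rw [hσv]; exact vinv _ (hgv _)) (vinv _ (hgv _))
    constructor
    · intro hij
      have hne : i ≠ j := ne_of_lt hij
      rw [hentry, Matrix.one_apply_ne hne, sub_zero, _root_.map_mul, _root_.map_mul,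
        vinv _ hc', hhv, one_mul, mul_one]
      exact (hu' i j).1 (le_of_lt hij)
    · intro hji
      rcases lt_or_eq_of_le hji with hlt | heq
      · have hne : i ≠ j := (ne_of_lt hlt).symm
        rw [hentry, Matrix.one_apply_ne hne, sub_zero, _root_.map_mul, _root_.map_mul,
          vinv _ hc', hhv, one_mul, mul_one]
        exact (hu' i j).2 hlt
      · subst heq
        have hudj : u j j = d j := rfl
        rw [hentry, Matrix.one_apply_eq, hudj]
        have hident2 : (d m)⁻¹ * (d j * hfun j) - 1
            = (d j - d m * (σ (g (Fin.rev j)) * g j))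
              * ((d m) * (σ (g (Fin.rev j)) * g j))⁻¹ := by
          rw [sub_mul,
            mul_inv_cancel₀ (mul_ne_zero (hdne m) (mul_ne_zero (hσgne (Fin.rev j)) (hgne j))),
            mul_inv]
          simp only [hh, map_inv₀]
          ring
        rw [hident2, _root_.map_mul, vinv _ (vmul _ _ hc' (vmul _ _ (by rw [hσv]; exact hgv _) (hgv _))),
          mul_one]
        exact hscalar j
  · -- the matrix identity
    rw [hT, smul_smul, mul_inv_cancel₀ (hdne m), one_smul]
end

section
/- Let G be a group, τ: G → G a group automorphism with τ∘τ = id, and γ ∈ G with τ(γ) = γ⁻¹. Define δ: G → G by δ(x) = γ⁻¹·τ(x)·γ, which is an involutive automorphism, and let G^δ be its fixed-point subgroup. Let H ⊆ J be subgroups of G with H normal in J, [J : H] finite, τ(J) = J and τ(H) = H. Write J^γ = γ⁻¹Jγ and H^γ = γ⁻¹Hγ. Assume [J : H] = [J ∩ G^δ : H ∩ G^δ]². Then the number of (H, J∩J^γ)-double cosets in J, multiplied by the number of (H∩J^γ, J∩G^δ)-double cosets in J∩J^γ, equals [J ∩ G^δ : H ∩ G^δ] (that is, the square root of [J : H]).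 -/
/-!
For `H ⊴ J` and `M ≤ J`, each double coset `H x M` with `x ∈ J` is the left coset `x (H ⊔ M)`,
so `|H \ J / M| · [M : H ⊓ M] = [J : H]`. Apply this to `M = J ∩ J^γ`, and then to
`H ∩ J^γ ⊴ J ∩ J^γ` with `J ∩ G^δ`, which lies in `J^γ` because conjugation by `γ` is `τ` on `G^δ`
and `τ(J) = J`. The two counts and `[J ∩ G^δ : H ∩ G^δ]` then multiply to `[J : H]`, which is
`[J ∩ G^δ : H ∩ G^δ]²` by hypothesis.
-/

/-- The number of `(A, B)`-double cosets `A x B` with representative `x` running through `L`. -/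
noncomputable def dosetCount {G : Type*} [Group G] (A L B : Set G) : ℕ :=
  Nat.card {S : Set G // ∃ x ∈ L, S = {y | ∃ a ∈ A, ∃ b ∈ B, y = a * x * b}}

open Pointwise Subgroup

namespace Subgroup

variable {G : Type*} [Group G]

theorem card_leftCosets_eq_relIndex (K J : Subgroup G) :
    Nat.card {S : Set G // ∃ x ∈ J, S = x • (K : Set G)} = K.relIndex J := by
  let f : J ⧸ K.subgroupOf J → {S : Set G // ∃ x ∈ J, S = x • (K : Set G)} :=
    Quotient.lift (fun x : J => ⟨(x : G) • (K : Set G), x, x.2, rfl⟩) fun x y hxy => by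
      simpa [leftCoset_eq_iff, mem_subgroupOf] using QuotientGroup.leftRel_apply.mp hxy
  refine (Nat.card_eq_of_bijective f ⟨fun x y => ?_, ?_⟩).symm
  · refine Quotient.inductionOn₂ x y fun a b hab => Quotient.sound ?_
    simpa [f, leftCoset_eq_iff, QuotientGroup.leftRel_apply, mem_subgroupOf] using
      congrArg Subtype.val hab
  · rintro ⟨S, x, hx, rfl⟩
    exact ⟨⟦⟨x, hx⟩⟧, rfl⟩

theorem doubleCoset_eq_smul_sup {H M : Subgroup G} (hM : M ≤ normalizer H) {x : G}
    (hx : x ∈ normalizer H) :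
    {y | ∃ a ∈ (H : Set G), ∃ b ∈ (M : Set G), y = a * x * b} =
      x • ((H ⊔ M : Subgroup G) : Set G) := by
  ext y
  rw [mem_leftCoset_iff, coe_mul_of_right_le_normalizer_left H M hM]
  constructor
  · rintro ⟨a, ha, b, hb, rfl⟩
    exact ⟨x⁻¹ * a * x, by simpa using (mem_normalizer_iff.mp (inv_mem hx) a).mp ha, b, hb,
      by group⟩
  · rintro ⟨a, ha, b, hb, hab⟩
    refine ⟨x * a * x⁻¹, (mem_normalizer_iff.mp hx a).mp ha, b, hb, ?_⟩
    rw [← mul_inv_cancel_left x y, ← hab]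
    group

theorem relIndex_sup_left_of_le_normalizer {H M : Subgroup G} (hM : M ≤ normalizer H) :
    H.relIndex (H ⊔ M) = H.relIndex M := by
  rw [← relIndex_subgroupOf (sup_le le_normalizer hM), ← relIndex_subgroupOf hM,
    subgroupOf_sup le_normalizer hM]
  exact relIndex_sup_left _ _

theorem dosetCount_eq_relIndex_sup {H J M : Subgroup G} (hJ : J ≤ normalizer H) (hMJ : M ≤ J) :
    dosetCount (H : Set G) (J : Set G) (M : Set G) = (H ⊔ M).relIndex J := by
  rw [dosetCount, ← card_leftCosets_eq_relIndex]
  refine Nat.card_congr (Equiv.subtypeEquivRight fun S => ?_)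
  refine exists_congr fun x => and_congr_right fun hx => ?_
  rw [doubleCoset_eq_smul_sup (hMJ.trans hJ) (hJ hx)]

theorem dosetCount_mul_relIndex {H J M : Subgroup G} (hHJ : H ≤ J) (hJ : J ≤ normalizer H)
    (hMJ : M ≤ J) :
    dosetCount (H : Set G) (J : Set G) (M : Set G) * H.relIndex M = H.relIndex J := by
  rw [dosetCount_eq_relIndex_sup hJ hMJ, ← relIndex_sup_left_of_le_normalizer (hMJ.trans hJ),
    mul_comm]
  exact relIndex_mul_relIndex _ _ _ le_sup_left (sup_le hHJ hMJ)

theorem inf_le_conj_of_map_eq {τ : G ≃* G} {γ : G} {J Jγ Gδ : Subgroup G}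
    (hτJ : Subgroup.map τ.toMonoidHom J = J) (hJγ : ∀ x, x ∈ Jγ ↔ γ * x * γ⁻¹ ∈ J)
    (hGδ : ∀ x, x ∈ Gδ ↔ γ⁻¹ * τ x * γ = x) :
    J ⊓ Gδ ≤ Jγ := by
  rintro x ⟨hxJ, hxδ⟩
  have hconj : γ * x * γ⁻¹ = τ x := by
    nth_rw 1 [← (hGδ x).mp hxδ]
    group
  rw [hJγ, hconj, ← hτJ]
  exact ⟨x, hxJ, rfl⟩

end Subgroup

theorem stmt_11_general {G : Type*} [Group G] (τ : G ≃* G)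
    (γ : G)
    (H J : Subgroup G) (hHJ : H ≤ J)
    (hnormal : ∀ j ∈ J, ∀ h ∈ H, j * h * j⁻¹ ∈ H)
    (hfin : H.relIndex J ≠ 0)
    (hτJ : Subgroup.map τ.toMonoidHom J = J)
    (Jγ : Subgroup G) (hJγ : ∀ x, x ∈ Jγ ↔ γ * x * γ⁻¹ ∈ J)
    (Gδ : Subgroup G) (hGδ : ∀ x, x ∈ Gδ ↔ γ⁻¹ * τ x * γ = x)
    (hsq : H.relIndex J = ((H ⊓ Gδ).relIndex (J ⊓ Gδ)) ^ 2) :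
    dosetCount (H : Set G) (J : Set G) ((J ⊓ Jγ : Subgroup G) : Set G) *
        dosetCount ((H ⊓ Jγ : Subgroup G) : Set G) ((J ⊓ Jγ : Subgroup G) : Set G)
          ((J ⊓ Gδ : Subgroup G) : Set G)
      = (H ⊓ Gδ).relIndex (J ⊓ Gδ) := by
  set n := (H ⊓ Gδ).relIndex (J ⊓ Gδ)
  have hJ : J ≤ normalizer H := (normal_subgroupOf_iff_le_normalizer hHJ).mp
    ((normal_subgroupOf_iff hHJ).mpr fun h j hh hj => hnormal j hj h hh)
  have hδγ : J ⊓ Gδ ≤ Jγ := inf_le_conj_of_map_eq hτJ hJγ hGδ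
  have hJJγ : J ⊓ Jγ ≤ normalizer (H ⊓ Jγ) :=
    (inf_le_inf hJ le_normalizer).trans inf_normalizer_le_normalizer_inf
  have h₁ := dosetCount_mul_relIndex hHJ hJ (inf_le_left : J ⊓ Jγ ≤ J)
  have h₂ := dosetCount_mul_relIndex (inf_le_inf_right Jγ hHJ) hJJγ (le_inf inf_le_left hδγ)
  have e₁ : H.relIndex (J ⊓ Jγ) = (H ⊓ Jγ).relIndex (J ⊓ Jγ) := by
    rw [← inf_relIndex_right H, ← inf_assoc, inf_of_le_left hHJ]
  have e₂ : (H ⊓ Jγ).relIndex (J ⊓ Gδ) = n := by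
    have hHδ : H ⊓ Gδ ≤ J ⊓ Gδ := inf_le_inf_right Gδ hHJ
    have hinf : H ⊓ Jγ ⊓ (J ⊓ Gδ) = H ⊓ Gδ :=
      le_antisymm (le_inf (inf_le_left.trans inf_le_left) (inf_le_right.trans inf_le_right))
        (le_inf (le_inf inf_le_left (hHδ.trans hδγ)) hHδ)
    rw [← inf_relIndex_right, hinf]
  have hn : n ≠ 0 := fun h0 => hfin (by simp [hsq, h0])
  refine Nat.eq_of_mul_eq_mul_right (Nat.pos_of_ne_zero hn) ?_
  rw [mul_assoc, ← e₂, h₂, ← e₁, h₁, hsq, e₂, sq]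

/-- **Lemma** (paper, Lemma 6.?; counting of double cosets).  Let `τ` be an involutive
automorphism of a group `G`, `γ ∈ G` with `τ(γ) = γ⁻¹`, and `δ(x) = γ⁻¹·τ(x)·γ` with
fixed-point subgroup `G^δ`.  Let `H ⊴ J` be subgroups of `G` of finite index, both
`τ`-stable, and write `J^γ = γ⁻¹Jγ`.  If `[J : H] = [J ∩ G^δ : H ∩ G^δ]²`, then
`|H \ J / (J ∩ J^γ)| · |(H ∩ J^γ) \ (J ∩ J^γ) / (J ∩ G^δ)| = [J ∩ G^δ : H ∩ G^δ]`. -/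
theorem stmt_11 {G : Type*} [Group G] (τ : G ≃* G) (hτ : ∀ x, τ (τ x) = x)
    (γ : G) (hγ : τ γ = γ⁻¹)
    (H J : Subgroup G) (hHJ : H ≤ J)
    (hnormal : ∀ j ∈ J, ∀ h ∈ H, j * h * j⁻¹ ∈ H)
    (hfin : H.relIndex J ≠ 0)
    (hτJ : Subgroup.map τ.toMonoidHom J = J)
    (hτH : Subgroup.map τ.toMonoidHom H = H)
    (Jγ : Subgroup G) (hJγ : ∀ x, x ∈ Jγ ↔ γ * x * γ⁻¹ ∈ J)
    (Gδ : Subgroup G) (hGδ : ∀ x, x ∈ Gδ ↔ γ⁻¹ * τ x * γ = x)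
    (hsq : H.relIndex J = ((H ⊓ Gδ).relIndex (J ⊓ Gδ)) ^ 2) :
    dosetCount (H : Set G) (J : Set G) ((J ⊓ Jγ : Subgroup G) : Set G) *
        dosetCount ((H ⊓ Jγ : Subgroup G) : Set G) ((J ⊓ Jγ : Subgroup G) : Set G)
          ((J ⊓ Gδ : Subgroup G) : Set G)
      = (H ⊓ Gδ).relIndex (J ⊓ Gδ) :=
  stmt_11_general τ γ H J hHJ hnormal hfin hτJ Jγ hJγ Gδ hGδ hsq
end

section
/- Let Q be a prime power, let l be the finite field with Q² elements, and let σ: l → l be the map x ↦ x^Q. Let R be an algebraically closed field of characteristic 0, and let φ: l^× → R^× be a group homomorphism such that φ(σ(x))·φ(x) = 1 for all x ∈ l^× (equivalently, φ(x)^{Q+1} = 1 for all x). Then there exists a group homomorphism α: l^× → R^× such that φ(x) = α(x)·α(σ(x))⁻¹ for all x ∈ l^×. -/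
/-- **Lemma (Hilbert 90 for the quadratic extension of finite fields).**
Let `Q` be a prime power, `l` the field with `Q²` elements, `σ : x ↦ x ^ Q` its Frobenius over
the subfield with `Q` elements, and `R` an algebraically closed field of characteristic `0`.
If `φ : l^× → R^×` is a homomorphism with `φ(σ x)·φ(x) = 1` for all `x`, then there is a
homomorphism `α : l^× → R^×` with `φ(x) = α(x)·α(σ x)⁻¹` for all `x`. -/
theorem stmt_12 (Q : ℕ) (hQ : IsPrimePow Q)
    (l : Type*) [Field l] [Fintype l] (hl : Fintype.card l = Q ^ 2)
    (R : Type*) [Field R] [IsAlgClosed R] [CharZero R]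
    (φ : lˣ →* Rˣ) (hφ : ∀ x : lˣ, φ (x ^ Q) * φ x = 1) :
    ∃ α : lˣ →* Rˣ, ∀ x : lˣ, φ x = α x * (α (x ^ Q))⁻¹ := by
  classical
  have hQ2 : 2 ≤ Q := hQ.two_le
  obtain ⟨g, hg⟩ := IsCyclic.exists_generator (α := lˣ)
  -- order of g
  have hord : orderOf g = Q ^ 2 - 1 := by
    rw [orderOf_eq_card_of_forall_mem_zpowers hg, Nat.card_eq_fintype_card,
      Fintype.card_units, hl]
  -- φ(g) ^ (Q+1) = 1
  have hφg : (φ g) ^ (Q + 1) = 1 := by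
    have := hφ g
    rw [map_pow] at this
    rw [pow_succ, this]
  -- find ζ in Rˣ with ζ ^ (Q-1) = (φ g)⁻¹
  obtain ⟨z, hz⟩ := IsAlgClosed.exists_pow_nat_eq (((φ g)⁻¹ : Rˣ) : R)
    (n := Q - 1) (by omega)
  have hz0 : z ≠ 0 := by
    intro h
    rw [h, zero_pow (by omega)] at hz
    exact (Units.ne_zero _) hz.symm
  set ζ : Rˣ := Units.mk0 z hz0 with hζdef
  have hζ : ζ ^ (Q - 1) = (φ g)⁻¹ := by
    rw [Units.ext_iff, Units.val_pow_eq_pow_val]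
    exact hz
  -- orderOf ζ ∣ orderOf g
  have hdvd : orderOf ζ ∣ orderOf g := by
    rw [hord]
    apply orderOf_dvd_of_pow_eq_one
    have h2 : Q ^ 2 - 1 = (Q - 1) * (Q + 1) := by
      zify [show 1 ≤ Q ^ 2 by nlinarith, show 1 ≤ Q by omega]
      ring
    rw [h2, pow_mul, hζ, inv_pow, hφg, inv_one]
  refine ⟨monoidHomOfForallMemZpowers hg hdvd, fun x => ?_⟩
  set α := monoidHomOfForallMemZpowers hg hdvd with hα
  have hαg : α g = ζ := monoidHomOfForallMemZpowers_apply_gen hg hdvd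
  obtain ⟨n, rfl⟩ := hg x
  have key : ζ ^ ((Q : ℤ) - 1) = (φ g)⁻¹ := by
    rw [← hζ, ← zpow_natCast]
    congr 1
    omega
  rw [map_zpow, map_zpow, ← zpow_natCast (g ^ n) Q, ← zpow_mul, map_zpow, hαg,
    ← zpow_neg, ← zpow_add]
  rw [show n + -(n * (Q : ℤ)) = ((Q : ℤ) - 1) * (-n) by ring, zpow_mul, key,
    inv_zpow, zpow_neg, inv_inv]
end
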